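/- Let A be a real n×m matrix, P ∈ ℝ^{n×k} with unit-norm columns, and Q ∈ ℝ^{m×k} with QᵀQ = I_k. Then over all k×k diagonal matrices B = diag(β₁,…,β_k), the functional ‖A − PBQᵀ‖² is minimized uniquely at β_i = (PᵀAQ)_{ii} for all i ∈ {1,…,k}, and at this optimum ‖A − PBQᵀ‖² = ‖A‖² − Σ_{i=1}^k β_i² = ‖A‖² − Σ_{i=1}^k (p_iᵀ A q_i)², where p_i, q_i denote the i-th columns of P and Q. -/
import Mathlib


open Matrix BigOperators

/-- Squared Frobenius norm of a real matrix. -/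
noncomputable def frobSq {n m : ℕ} (X : Matrix (Fin n) (Fin m) ℝ) : ℝ :=
  ∑ i, ∑ j, (X i j) ^ 2

lemma frobSq_eq_trace {n m : ℕ} (X : Matrix (Fin n) (Fin m) ℝ) :
    frobSq X = Matrix.trace (X * Xᵀ) := by
  simp [frobSq, Matrix.trace, Matrix.diag, Matrix.mul_apply, sq]

lemma trace_mul_diagonal' {k : ℕ} (C : Matrix (Fin k) (Fin k) ℝ) (d : Fin k → ℝ) :
    Matrix.trace (C * Matrix.diagonal d) = ∑ i, C i i * d i := by
  simp [Matrix.trace, Matrix.diag, Matrix.mul_diagonal]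

/-- For `P` with unit-norm columns and `QᵀQ = Iₖ`, the functional
`B ↦ ‖A - PBQᵀ‖²` over diagonal `B = diag(β₁,…,βₖ)` is uniquely minimised at
`βᵢ = (PᵀAQ)ᵢᵢ`, with minimal value `‖A‖² - ∑ᵢ βᵢ² = ‖A‖² - ∑ᵢ (pᵢᵀAqᵢ)²`. -/
theorem optimal_diagonal_B {n m k : ℕ}
    (A : Matrix (Fin n) (Fin m) ℝ)
    (P : Matrix (Fin n) (Fin k) ℝ) (hP : ∀ i, ∑ a, P a i ^ 2 = 1)
    (Q : Matrix (Fin m) (Fin k) ℝ) (hQ : Qᵀ * Q = 1)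
    (β₀ : Fin k → ℝ) (hβ₀ : ∀ i, β₀ i = (Pᵀ * A * Q) i i) :
    (∀ β : Fin k → ℝ,
        frobSq (A - P * Matrix.diagonal β₀ * Qᵀ) ≤ frobSq (A - P * Matrix.diagonal β * Qᵀ)) ∧
    (∀ β : Fin k → ℝ, β ≠ β₀ →
        frobSq (A - P * Matrix.diagonal β₀ * Qᵀ) < frobSq (A - P * Matrix.diagonal β * Qᵀ)) ∧
    frobSq (A - P * Matrix.diagonal β₀ * Qᵀ) = frobSq A - ∑ i, β₀ i ^ 2 ∧
    frobSq (A - P * Matrix.diagonal β₀ * Qᵀ) =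
      frobSq A - ∑ i, ((fun a => P a i) ⬝ᵥ (A *ᵥ fun b => Q b i)) ^ 2 := by
  have key : ∀ β : Fin k → ℝ, frobSq (A - P * Matrix.diagonal β * Qᵀ)
      = frobSq A - ∑ i, β₀ i ^ 2 + ∑ i, (β i - β₀ i) ^ 2 := by
    intro β
    set M := P * Matrix.diagonal β * Qᵀ with hM
    have hMT : Mᵀ = Q * Matrix.diagonal β * Pᵀ := by
      simp [hM, Matrix.transpose_mul, Matrix.diagonal_transpose, Matrix.mul_assoc]
    have h1 : Matrix.trace (A * Mᵀ) = ∑ i, β₀ i * β i := by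
      rw [hMT, show A * (Q * Matrix.diagonal β * Pᵀ) = (A * Q * Matrix.diagonal β) * Pᵀ by
        simp [Matrix.mul_assoc], Matrix.trace_mul_comm,
        show Pᵀ * (A * Q * Matrix.diagonal β) = (Pᵀ * A * Q) * Matrix.diagonal β by
        simp [Matrix.mul_assoc], trace_mul_diagonal']
      exact Finset.sum_congr rfl fun i _ => by rw [hβ₀ i]
    have h1' : Matrix.trace (M * Aᵀ) = ∑ i, β₀ i * β i := by
      rw [← h1, ← Matrix.trace_transpose (M * Aᵀ)]
      simp [Matrix.transpose_mul]
    have h2 : Matrix.trace (M * Mᵀ) = ∑ i, β i ^ 2 := by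
      have e : M * Mᵀ = P * Matrix.diagonal (fun i => β i * β i) * Pᵀ := by
        rw [hMT, hM]
        rw [show P * Matrix.diagonal β * Qᵀ * (Q * Matrix.diagonal β * Pᵀ)
            = P * Matrix.diagonal β * (Qᵀ * Q) * Matrix.diagonal β * Pᵀ by
          simp [Matrix.mul_assoc], hQ]
        simp [Matrix.mul_assoc, Matrix.diagonal_mul_diagonal]
      rw [e, Matrix.trace_mul_comm, show Pᵀ * (P * Matrix.diagonal (fun i => β i * β i))
          = (Pᵀ * P) * Matrix.diagonal (fun i => β i * β i) by simp [Matrix.mul_assoc],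
        trace_mul_diagonal']
      refine Finset.sum_congr rfl fun i _ => ?_
      have : (Pᵀ * P) i i = 1 := by
        simpa [Matrix.mul_apply, Matrix.transpose_apply, sq] using hP i
      rw [this, one_mul, sq]
    have expand : frobSq (A - M)
        = Matrix.trace (A * Aᵀ) - Matrix.trace (A * Mᵀ) - Matrix.trace (M * Aᵀ)
          + Matrix.trace (M * Mᵀ) := by
      rw [frobSq_eq_trace]
      rw [Matrix.transpose_sub, Matrix.sub_mul, Matrix.mul_sub, Matrix.mul_sub]
      simp only [Matrix.trace_sub, Matrix.trace_add]
      ring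
    have sumid : ∑ i, (β i - β₀ i) ^ 2
        = ∑ i, β i ^ 2 - 2 * ∑ i, β₀ i * β i + ∑ i, β₀ i ^ 2 := by
      have e : ∀ i : Fin k, (β i - β₀ i) ^ 2 = β i ^ 2 - 2 * (β₀ i * β i) + β₀ i ^ 2 := by
        intro i; ring
      simp_rw [e]
      rw [Finset.sum_add_distrib, Finset.sum_sub_distrib, Finset.mul_sum]
    rw [expand, h1, h1', h2, ← frobSq_eq_trace, sumid]
    ring
  have hval : frobSq (A - P * Matrix.diagonal β₀ * Qᵀ) = frobSq A - ∑ i, β₀ i ^ 2 := by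
    rw [key β₀]; simp
  refine ⟨?_, ?_, hval, ?_⟩
  · intro β
    rw [hval, key β]
    have : (0:ℝ) ≤ ∑ i, (β i - β₀ i) ^ 2 :=
      Finset.sum_nonneg fun i _ => sq_nonneg _
    linarith
  · intro β hβ
    rw [hval, key β]
    obtain ⟨i, hi⟩ := Function.ne_iff.mp hβ
    have : (0:ℝ) < ∑ i, (β i - β₀ i) ^ 2 := by
      refine Finset.sum_pos' (fun j _ => sq_nonneg _) ⟨i, Finset.mem_univ i, ?_⟩
      have h := sub_ne_zero.mpr hi
      positivity
    linarith
  · rw [hval]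
    congr 1
    refine Finset.sum_congr rfl fun i _ => ?_
    congr 1
    rw [hβ₀ i]
    simp only [Matrix.mul_apply, Matrix.transpose_apply, dotProduct, Matrix.mulVec, dotProduct]
    simp_rw [Finset.sum_mul, Finset.mul_sum]
    rw [Finset.sum_comm]
    exact Finset.sum_congr rfl fun a _ => Finset.sum_congr rfl fun b _ => by ring
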